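/- Let U and V be nonnegative random variables defined on the same probability space, and suppose that for every q ∈ [0,1] the random variable q·U + (1−q)·V has the same distribution as U (equivalently, its law does not depend on q). Then U = V almost surely. -/

import Mathlib

/-!
Equal laws give equal Laplace transforms, so `E[e^{-(U+V)/2}] = E[e^{-U}] = E[e^{-V}]`
(take `q = 1/2` and `q = 0`). Hence the gap `(e^{-U} + e^{-V})/2 - e^{-(U+V)/2}`, which is
nonnegative by convexity of `x ↦ e^{-x}`, has zero expectation and so vanishes almost surely;
strict convexity then forces `U = V` almost surely.
-/

open MeasureTheory ProbabilityTheory Real Set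

lemma strictConvexOn_exp_neg : StrictConvexOn ℝ univ fun x : ℝ => exp (-x) :=
  ⟨convex_univ, fun x _ y _ hxy a b ha hb hab => by
    convert strictConvexOn_exp.2 (mem_univ (-x)) (mem_univ (-y)) (neg_injective.ne hxy) ha hb hab
      using 2
    simp only [smul_eq_mul]
    ring⟩

lemma integrable_exp_neg_of_nonneg {Ω : Type*} [MeasurableSpace Ω] {μ : Measure Ω}
    [IsFiniteMeasure μ] {W : Ω → ℝ} (hW : AEStronglyMeasurable W μ) (hW0 : 0 ≤ᵐ[μ] W) :
    Integrable (fun ω => exp (-W ω)) μ := by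
  refine (integrable_const 1).mono' (continuous_exp.comp_aestronglyMeasurable hW.neg) ?_
  filter_upwards [hW0] with ω hω
  simpa [abs_of_pos (exp_pos _)] using hω

theorem StrictConvexOn.ae_eq_of_integral_comp_eq {Ω : Type*} [MeasurableSpace Ω]
    {μ : Measure Ω} {s : Set ℝ} {f : ℝ → ℝ} (hf : StrictConvexOn ℝ s f) {X Y : Ω → ℝ}
    (hXs : ∀ᵐ ω ∂μ, X ω ∈ s) (hYs : ∀ᵐ ω ∂μ, Y ω ∈ s) {a b : ℝ} (ha : 0 < a) (hb : 0 < b)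
    (hab : a + b = 1) (hfX : Integrable (fun ω => f (X ω)) μ)
    (hfY : Integrable (fun ω => f (Y ω)) μ)
    (hfXY : Integrable (fun ω => f (a * X ω + b * Y ω)) μ)
    (heq : ∫ ω, f (a * X ω + b * Y ω) ∂μ = a * ∫ ω, f (X ω) ∂μ + b * ∫ ω, f (Y ω) ∂μ) :
    X =ᵐ[μ] Y := by
  have hcomb : Integrable (fun ω => a * f (X ω) + b * f (Y ω)) μ :=
    (hfX.const_mul a).add (hfY.const_mul b)
  set gap := fun ω => a * f (X ω) + b * f (Y ω) - f (a * X ω + b * Y ω)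
  have gap_integrable : Integrable gap μ := hcomb.sub hfXY
  have gap_nonneg : 0 ≤ᵐ[μ] gap := by
    filter_upwards [hXs, hYs] with ω hx hy
    exact sub_nonneg.2 (hf.convexOn.2 hx hy ha.le hb.le hab)
  have gap_integral : ∫ ω, gap ω ∂μ = 0 := by
    rw [integral_sub hcomb hfXY,
      integral_add (hfX.const_mul a) (hfY.const_mul b), integral_const_mul,
      integral_const_mul, heq, sub_self]
  have gap_zero := (integral_eq_zero_iff_of_nonneg_ae gap_nonneg gap_integrable).1 gap_integral
  filter_upwards [hXs, hYs, gap_zero] with ω hx hy hω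
  by_contra hne
  have := hf.2 hx hy hne ha hb hab
  simp only [smul_eq_mul, Pi.zero_apply, gap] at this hω
  linarith

/-- If `U, V ≥ 0` are random variables on the same probability space and for every
`q ∈ [0,1]` the random variable `q·U + (1−q)·V` has the same law as `U`, then
`U = V` almost surely. -/
theorem stmt_7 {Ω : Type*} [MeasurableSpace Ω] (P : Measure Ω) [IsProbabilityMeasure P]
    (U V : Ω → ℝ) (hU : Measurable U) (hV : Measurable V)
    (hU0 : ∀ ω, 0 ≤ U ω) (hV0 : ∀ ω, 0 ≤ V ω)
    (hlaw : ∀ q : ℝ, q ∈ Set.Icc (0 : ℝ) 1 →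
      Measure.map (fun ω => q * U ω + (1 - q) * V ω) P = Measure.map U P) :
    ∀ᵐ ω ∂P, U ω = V ω := by
  have laplace_eq : ∀ q ∈ Icc (0 : ℝ) 1,
      ∫ ω, exp (-(q * U ω + (1 - q) * V ω)) ∂P = ∫ ω, exp (-U ω) ∂P := fun q hq =>
    (IdentDistrib.comp ⟨by fun_prop, hU.aemeasurable, hlaw q hq⟩
      (by fun_prop : Measurable fun x : ℝ => exp (-x))).integral_eq
  have laplace_V : ∫ ω, exp (-V ω) ∂P = ∫ ω, exp (-U ω) ∂P := by
    simpa using laplace_eq 0 (by norm_num)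
  have integrable_of_nonneg : ∀ W : Ω → ℝ, Measurable W → (∀ ω, 0 ≤ W ω) →
      Integrable (fun ω => exp (-W ω)) P := fun W hW hW0 =>
    integrable_exp_neg_of_nonneg hW.aestronglyMeasurable (ae_of_all _ hW0)
  refine strictConvexOn_exp_neg.ae_eq_of_integral_comp_eq (ae_of_all _ fun _ => mem_univ _)
    (ae_of_all _ fun _ => mem_univ _) (a := 1 / 2) (b := 1 - 1 / 2) (by norm_num) (by norm_num)
    (by norm_num) (integrable_of_nonneg U hU hU0) (integrable_of_nonneg V hV hV0)
    (integrable_of_nonneg _ (by fun_prop) fun ω => by linarith [hU0 ω, hV0 ω]) ?_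
  rw [laplace_eq _ (by norm_num), laplace_V]
  ring
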